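/- arXiv:math/0411136 — 3 statements merged into one kernel-verified Lean document; each statement's English description precedes it below -/
import Mathlib

section
/- Addition formula for noncommutative shifted factorials of type II: Let A and C be elements of a unit ring R and let n be a nonnegative integer. Then ⌊C−A+I; C⌉_n · (C−A+nI)^{−1} − C^{−1}A · ⌊C−A+I; C+I⌉_n · (C−A+nI)^{−1} = ⌊C−A+I; C⌉_{n+1} · (C−A+(n+1)I)^{−1}, where ⌊C−A+I; C⌉_n = ∏_{j=1}^{n} (C+(j−1)I)^{−1}(C−A+jI) (ordered product, left to right in increasing j). -/
/-- Ordered (noncommutative) product `f 0 * f 1 * ⋯ * f (n-1)`. -/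
def opr {R : Type*} [Ring R] (n : ℕ) (f : ℕ → R) : R :=
  ((List.range n).map f).prod

lemma opr_zero {R : Type*} [Ring R] (f : ℕ → R) : opr 0 f = 1 := rfl

lemma opr_succ {R : Type*} [Ring R] (n : ℕ) (f : ℕ → R) :
    opr (n + 1) f = opr n f * f n := by
  simp [opr, List.range_succ]

lemma swapAux {R : Type*} [Ring R] (A u : R) (hu : IsUnit u) :
    A * (Ring.inverse u * (u - A)) = (u - A) * (Ring.inverse u * A) := by
  rw [mul_sub (Ring.inverse u), Ring.inverse_mul_cancel _ hu, sub_mul,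
    ← mul_assoc u, Ring.mul_inverse_cancel _ hu, one_mul, mul_sub, mul_one]

lemma keyII {R : Type*} [Ring R] (A C : R) (n : ℕ)
    (hC : ∀ m : ℕ, m < n + 1 → IsUnit (C + (m : R))) :
    Ring.inverse C * A *
      opr n (fun j => Ring.inverse (C + 1 + (j : R)) * (C - A + (j : R) + 1)) =
    opr n (fun j => Ring.inverse (C + (j : R)) * (C - A + (j : R) + 1)) *
      (Ring.inverse (C + (n : R)) * A) := by
  induction n with
  | zero => simp [opr_zero]
  | succ n ih =>
      have hC' : ∀ m : ℕ, m < n + 1 → IsUnit (C + (m : R)) :=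
        fun m hm => hC m (by omega)
      have hu : IsUnit (C + 1 + (n : R)) := by
        have h := hC (n + 1) (by omega)
        push_cast at h
        rwa [show C + ((n : R) + 1) = C + 1 + (n : R) by abel] at h
      have hsub : (C - A + (n : R) + 1) = (C + 1 + (n : R)) - A := by abel
      have hCn1 : (C + ((n : R) + 1)) = C + 1 + (n : R) := by abel
      have hswap := swapAux A (C + 1 + (n : R)) hu
      rw [opr_succ, opr_succ, ← mul_assoc, ← mul_assoc, ih hC']
      push_cast
      rw [hCn1, hsub]
      simp only [mul_assoc]
      rw [hswap]

/-- Addition formula for noncommutative shifted factorials of type II: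
`⌊C−A+I; C⌉_n (C−A+nI)⁻¹ − C⁻¹A ⌊C−A+I; C+I⌉_n (C−A+nI)⁻¹
  = ⌊C−A+I; C⌉_{n+1} (C−A+(n+1)I)⁻¹`. -/
theorem additionTypeII {R : Type*} [Ring R] (A C : R) (n : ℕ)
    (hC : ∀ m : ℕ, m < n + 1 → IsUnit (C + (m : R)))
    (hn : IsUnit (C - A + (n : R)))
    (hn1 : IsUnit (C - A + (n : R) + 1)) :
    opr n (fun j => Ring.inverse (C + (j : R)) * (C - A + (j : R) + 1)) *
        Ring.inverse (C - A + (n : R)) -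
      Ring.inverse C * A *
        opr n (fun j => Ring.inverse (C + 1 + (j : R)) * (C - A + (j : R) + 1)) *
        Ring.inverse (C - A + (n : R)) =
    opr (n + 1) (fun j => Ring.inverse (C + (j : R)) * (C - A + (j : R) + 1)) *
      Ring.inverse (C - A + (n : R) + 1) := by
  set P := opr n (fun j => Ring.inverse (C + (j : R)) * (C - A + (j : R) + 1)) with hP
  have hCn : IsUnit (C + (n : R)) := hC n (by omega)
  have hRHS : opr (n + 1) (fun j => Ring.inverse (C + (j : R)) * (C - A + (j : R) + 1)) *
      Ring.inverse (C - A + (n : R) + 1) = P * Ring.inverse (C + (n : R)) := by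
    rw [opr_succ, ← hP, mul_assoc, mul_assoc, Ring.mul_inverse_cancel _ hn1, mul_one]
  rw [hRHS, keyII A C n hC, ← hP]
  rw [mul_assoc P (Ring.inverse (C + (n : R)) * A), ← mul_sub P]
  congr 1
  have hXn : (C + (n : R)) - A = C - A + (n : R) := by abel
  calc Ring.inverse (C - A + (n : R)) -
        Ring.inverse (C + (n : R)) * A * Ring.inverse (C - A + (n : R))
      = (1 - Ring.inverse (C + (n : R)) * A) * Ring.inverse (C - A + (n : R)) := by
        rw [sub_mul, one_mul]
    _ = Ring.inverse (C + (n : R)) * ((C + (n : R)) - A) * Ring.inverse (C - A + (n : R)) := by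
        rw [mul_sub, Ring.inverse_mul_cancel _ hCn]
    _ = Ring.inverse (C + (n : R)) := by
        rw [hXn, mul_assoc, Ring.mul_inverse_cancel _ hn, mul_one]
end

section
/- Addition formula for noncommutative Q-shifted factorials of type II: Let A and C be elements of a unit ring R, let Q be an element of R commuting with both A and C, and let n be a nonnegative integer. Then ⌊CA^{−1}Q; C; Q, A⌉_n · (A−CQ^{n})^{−1} − (I−C)^{−1}(I−A) · ⌊CA^{−1}Q; CQ; Q, A⌉_n · (A−CQ^{n})^{−1} = ⌊CA^{−1}Q; C; Q, A⌉_{n+1} · (A−CQ^{n+1})^{−1}, where ⌊CA^{−1}Q; C; Q, A⌉_n = ∏_{j=1}^{n} [(I−CQ^{j−1})^{−1}(I−CA^{−1}Q^{j})·A] (ordered product, left to right in increasing j). -/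
lemma swap_lemma {R : Type*} [Ring R] (A B : R) (hB : IsUnit (1 - B)) :
    (A - B) * (Ring.inverse (1 - B) * (1 - A)) =
      (1 - A) * (Ring.inverse (1 - B) * (A - B)) := by
  have h1 : (1 - B) * Ring.inverse (1 - B) = 1 := Ring.mul_inverse_cancel _ hB
  have h2 : Ring.inverse (1 - B) * (1 - B) = 1 := Ring.inverse_mul_cancel _ hB
  have hAB : A - B = (1 - B) - (1 - A) := by abel
  have e1 : (A - B) * Ring.inverse (1 - B) = 1 - (1 - A) * Ring.inverse (1 - B) := by
    rw [hAB, sub_mul, h1]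
  have e2 : Ring.inverse (1 - B) * (A - B) = 1 - Ring.inverse (1 - B) * (1 - A) := by
    rw [hAB, mul_sub, h2]
  calc (A - B) * (Ring.inverse (1 - B) * (1 - A))
      = ((A - B) * Ring.inverse (1 - B)) * (1 - A) := by rw [mul_assoc]
    _ = (1 - (1 - A) * Ring.inverse (1 - B)) * (1 - A) := by rw [e1]
    _ = (1 - A) - (1 - A) * (Ring.inverse (1 - B) * (1 - A)) := by
        rw [sub_mul, one_mul, mul_assoc]
    _ = (1 - A) * (1 - Ring.inverse (1 - B) * (1 - A)) := by
        rw [mul_sub (1 - A) 1 (Ring.inverse (1 - B) * (1 - A)), mul_one]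
    _ = (1 - A) * (Ring.inverse (1 - B) * (A - B)) := by rw [← e2]

lemma factor_simp {R : Type*} [Ring R] (A C Q : R) (hQA : Q * A = A * Q)
    (hA : IsUnit A) (j : ℕ) :
    (1 - C * Ring.inverse A * Q * Q ^ j) * A = A - C * (Q * Q ^ j) := by
  have cQA : Commute Q A := hQA
  have hc : (Q * Q ^ j) * A = A * (Q * Q ^ j) := (cQA.mul_left (cQA.pow_left j)).eq
  have key : C * Ring.inverse A * Q * Q ^ j * A = C * (Q * Q ^ j) := by
    rw [mul_assoc (C * Ring.inverse A) Q (Q ^ j), mul_assoc (C * Ring.inverse A), hc,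
      mul_assoc C, ← mul_assoc (Ring.inverse A), Ring.inverse_mul_cancel _ hA, one_mul]
  rw [sub_mul, one_mul, key]

lemma keyK {R : Type*} [Ring R] (A C Q : R) (hQA : Q * A = A * Q) (hA : IsUnit A) :
    ∀ n : ℕ, (∀ m : ℕ, m < n + 1 → IsUnit (1 - C * Q ^ m)) →
    opr n (fun j => Ring.inverse (1 - C * Q ^ j) * (1 - C * Ring.inverse A * Q * Q ^ j) * A) *
      Ring.inverse (1 - C * Q ^ n) * (1 - A)
    = Ring.inverse (1 - C) * (1 - A) *
      opr n (fun j => Ring.inverse (1 - C * Q * Q ^ j) * (1 - C * Ring.inverse A * Q * Q ^ j) * A)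
  | 0, _ => by simp [opr]
  | (n + 1), hC => by
    have ih := keyK A C Q hQA hA n (fun m hm => hC m (Nat.lt_succ_of_lt hm))
    have hfs := factor_simp A C Q hQA hA
    have hB : IsUnit (1 - C * (Q * Q ^ n)) := by
      have h := hC (n + 1) (Nat.lt_succ_self _)
      rwa [pow_succ'] at h
    have hpow : (1 : R) - C * Q ^ (n + 1) = 1 - C * (Q * Q ^ n) := by
      rw [pow_succ']
    have hfn : Ring.inverse (1 - C * (Q * Q ^ n)) * (A - C * (Q * Q ^ n)) =
        Ring.inverse (1 - C * Q * Q ^ n) * (1 - C * Ring.inverse A * Q * Q ^ n) * A := by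
      rw [mul_assoc (Ring.inverse (1 - C * Q * Q ^ n)), hfs n, ← mul_assoc C Q (Q ^ n)]
    calc opr (n + 1) (fun j => Ring.inverse (1 - C * Q ^ j) *
            (1 - C * Ring.inverse A * Q * Q ^ j) * A) *
          Ring.inverse (1 - C * Q ^ (n + 1)) * (1 - A)
        = opr n (fun j => Ring.inverse (1 - C * Q ^ j) *
            (1 - C * Ring.inverse A * Q * Q ^ j) * A) *
          (Ring.inverse (1 - C * Q ^ n) *
            ((A - C * (Q * Q ^ n)) *
              (Ring.inverse (1 - C * (Q * Q ^ n)) * (1 - A)))) := by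
          rw [opr_succ, mul_assoc (Ring.inverse (1 - C * Q ^ n)), hfs n, hpow]
          noncomm_ring
      _ = opr n (fun j => Ring.inverse (1 - C * Q ^ j) *
            (1 - C * Ring.inverse A * Q * Q ^ j) * A) *
          (Ring.inverse (1 - C * Q ^ n) *
            ((1 - A) *
              (Ring.inverse (1 - C * (Q * Q ^ n)) * (A - C * (Q * Q ^ n))))) := by
          rw [swap_lemma A (C * (Q * Q ^ n)) hB]
      _ = (opr n (fun j => Ring.inverse (1 - C * Q ^ j) *
            (1 - C * Ring.inverse A * Q * Q ^ j) * A) *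
          Ring.inverse (1 - C * Q ^ n) * (1 - A)) *
          (Ring.inverse (1 - C * (Q * Q ^ n)) * (A - C * (Q * Q ^ n))) := by
          noncomm_ring
      _ = (Ring.inverse (1 - C) * (1 - A) *
          opr n (fun j => Ring.inverse (1 - C * Q * Q ^ j) *
            (1 - C * Ring.inverse A * Q * Q ^ j) * A)) *
          (Ring.inverse (1 - C * (Q * Q ^ n)) * (A - C * (Q * Q ^ n))) := by
          rw [ih]
      _ = Ring.inverse (1 - C) * (1 - A) *
          opr (n + 1) (fun j => Ring.inverse (1 - C * Q * Q ^ j) *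
            (1 - C * Ring.inverse A * Q * Q ^ j) * A) := by
          simp only [opr_succ]
          rw [← hfn]
          noncomm_ring

/-- Addition formula for noncommutative Q-shifted factorials of type II:
`⌊CA⁻¹Q; C; Q, A⌉_n (A−CQⁿ)⁻¹ − (I−C)⁻¹(I−A) ⌊CA⁻¹Q; CQ; Q, A⌉_n (A−CQⁿ)⁻¹
  = ⌊CA⁻¹Q; C; Q, A⌉_{n+1} (A−CQ^{n+1})⁻¹`. -/
theorem additionQTypeII {R : Type*} [Ring R] (A C Q : R) (n : ℕ)
    (hQA : Q * A = A * Q) (hQC : Q * C = C * Q)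
    (hA : IsUnit A)
    (hC : ∀ m : ℕ, m < n + 1 → IsUnit (1 - C * Q ^ m))
    (h1C : IsUnit (1 - C))
    (hn : IsUnit (A - C * Q ^ n))
    (hn1 : IsUnit (A - C * Q ^ (n + 1))) :
    opr n (fun j =>
        Ring.inverse (1 - C * Q ^ j) * (1 - C * Ring.inverse A * Q * Q ^ j) * A) *
        Ring.inverse (A - C * Q ^ n) -
      Ring.inverse (1 - C) * (1 - A) *
        opr n (fun j =>
          Ring.inverse (1 - C * Q * Q ^ j) * (1 - C * Ring.inverse A * Q * Q ^ j) * A) *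
        Ring.inverse (A - C * Q ^ n) =
    opr (n + 1) (fun j =>
      Ring.inverse (1 - C * Q ^ j) * (1 - C * Ring.inverse A * Q * Q ^ j) * A) *
      Ring.inverse (A - C * Q ^ (n + 1)) := by
  have key := keyK A C Q hQA hA n hC
  have hVn : Ring.inverse (1 - C * Q ^ n) * (1 - C * Q ^ n) = 1 :=
    Ring.inverse_mul_cancel _ (hC n (Nat.lt_succ_self _))
  have hUn : (A - C * Q ^ n) * Ring.inverse (A - C * Q ^ n) = 1 :=
    Ring.mul_inverse_cancel _ hn
  have hUn1 : (A - C * Q ^ (n + 1)) * Ring.inverse (A - C * Q ^ (n + 1)) = 1 :=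
    Ring.mul_inverse_cancel _ hn1
  have hpow : C * (Q * Q ^ n) = C * Q ^ (n + 1) := by rw [pow_succ']
  set P := opr n (fun j =>
      Ring.inverse (1 - C * Q ^ j) * (1 - C * Ring.inverse A * Q * Q ^ j) * A) with hP
  set P' := opr n (fun j =>
      Ring.inverse (1 - C * Q * Q ^ j) * (1 - C * Ring.inverse A * Q * Q ^ j) * A) with hP'
  -- RHS equals P * inv(1 - C Q^n)
  have hRHS : opr (n + 1) (fun j =>
      Ring.inverse (1 - C * Q ^ j) * (1 - C * Ring.inverse A * Q * Q ^ j) * A) *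
      Ring.inverse (A - C * Q ^ (n + 1)) = P * Ring.inverse (1 - C * Q ^ n) := by
    rw [opr_succ, ← hP, mul_assoc (Ring.inverse (1 - C * Q ^ n)),
      factor_simp A C Q hQA hA n, hpow]
    calc P * (Ring.inverse (1 - C * Q ^ n) * (A - C * Q ^ (n + 1))) *
          Ring.inverse (A - C * Q ^ (n + 1))
        = P * (Ring.inverse (1 - C * Q ^ n) *
            ((A - C * Q ^ (n + 1)) * Ring.inverse (A - C * Q ^ (n + 1)))) := by
          noncomm_ring
      _ = P * Ring.inverse (1 - C * Q ^ n) := by rw [hUn1, mul_one]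
  rw [hRHS]
  -- rewrite the subtracted term using the key lemma
  have hsub : Ring.inverse (1 - C) * (1 - A) * P' =
      P * Ring.inverse (1 - C * Q ^ n) * (1 - A) := key.symm
  rw [hsub]
  -- Now: P * U - (P * V * (1 - A)) * U = P * V
  calc P * Ring.inverse (A - C * Q ^ n) -
        P * Ring.inverse (1 - C * Q ^ n) * (1 - A) * Ring.inverse (A - C * Q ^ n)
      = P * Ring.inverse (1 - C * Q ^ n) *
          (((1 - C * Q ^ n) - (1 - A)) * Ring.inverse (A - C * Q ^ n)) := by
        have t1 : P * Ring.inverse (1 - C * Q ^ n) *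
            ((1 - C * Q ^ n) * Ring.inverse (A - C * Q ^ n)) =
            P * Ring.inverse (A - C * Q ^ n) := by
          rw [← mul_assoc, mul_assoc P, hVn, mul_one]
        have t2 : P * Ring.inverse (1 - C * Q ^ n) *
            ((1 - A) * Ring.inverse (A - C * Q ^ n)) =
            P * Ring.inverse (1 - C * Q ^ n) * (1 - A) * Ring.inverse (A - C * Q ^ n) := by
          rw [mul_assoc (P * Ring.inverse (1 - C * Q ^ n))]
        rw [sub_mul (1 - C * Q ^ n) (1 - A) (Ring.inverse (A - C * Q ^ n)),
          mul_sub (P * Ring.inverse (1 - C * Q ^ n))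
            ((1 - C * Q ^ n) * Ring.inverse (A - C * Q ^ n))
            ((1 - A) * Ring.inverse (A - C * Q ^ n)), t1, t2]
    _ = P * Ring.inverse (1 - C * Q ^ n) := by
        have h : (1 : R) - C * Q ^ n - (1 - A) = A - C * Q ^ n := by abel
        rw [h, hUn, mul_one]
end

section
/- Product identity for reversed Chu–Vandermonde summation (Lemma 4 of the paper): Let A and C be elements of a unit ring R, let Q be an element of R commuting with both A and C, and let n be a nonnegative integer. Then (∏_{j=1}^{n} [C^{−1}A(I−AQ^{j−1})^{−1}(I−A^{−1}CQ^{n−j})]) · ⌈A; C; Q, A^{−1}C⌋_n = ⌈A^{−1}C; C; Q, I⌋_n, where both ∏ and the Q-shifted factorials are ordered products taken left to right in increasing j. -/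
namespace RCV

variable {R : Type*} [Ring R]

theorem opr_zero (f : ℕ → R) : opr 0 f = 1 := rfl

theorem opr_succ_left (n : ℕ) (f : ℕ → R) :
    opr (n + 1) f = f 0 * opr n (fun j => f (j + 1)) := by
  simp [opr, List.range_succ_eq_map, List.map_map, Function.comp_def]

theorem opr_succ_right (n : ℕ) (f : ℕ → R) :
    opr (n + 1) f = opr n f * f n := by
  simp [opr, List.range_succ]

theorem opr_congr {n : ℕ} {f g : ℕ → R} (h : ∀ j, j < n → f j = g j) :
    opr n f = opr n g := by
  unfold opr
  congr 1
  exact List.map_congr_left fun a ha => h a (List.mem_range.mp ha)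

theorem comm_inv {x y : R} (h : y * x = x * y) :
    y * Ring.inverse x = Ring.inverse x * y := by
  by_cases hx : IsUnit x
  · calc y * Ring.inverse x
        = Ring.inverse x * x * (y * Ring.inverse x) := by
          rw [Ring.inverse_mul_cancel x hx, one_mul]
    _ = Ring.inverse x * (x * y) * Ring.inverse x := by noncomm_ring
    _ = Ring.inverse x * (y * x) * Ring.inverse x := by rw [← h]
    _ = Ring.inverse x * y * (x * Ring.inverse x) := by noncomm_ring
    _ = Ring.inverse x * y := by rw [Ring.mul_inverse_cancel x hx, mul_one]
  · rw [Ring.inverse_non_unit x hx, mul_zero, zero_mul]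

theorem qpow {x y : R} (h : y * x = x * y) (k : ℕ) : y ^ k * x = x * y ^ k :=
  (Commute.pow_left h k)



section Defs

variable (A C Q : R)

/-- `B = A⁻¹C`. -/
noncomputable def Bv : R := Ring.inverse A * C

/-- `u p = (1 - A Q^p)⁻¹`. -/
noncomputable def uv (p : ℕ) : R := Ring.inverse (1 - A * Q ^ p)

/-- `w g = (1 - C Q^g)⁻¹`. -/
noncomputable def wv (g : ℕ) : R := Ring.inverse (1 - C * Q ^ g)

/-- factor of the left-hand product. -/
noncomputable def Xv (p q : ℕ) : R :=
  Ring.inverse C * A * Ring.inverse (1 - A * Q ^ p) *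
    (1 - Ring.inverse A * C * Q ^ q)

end Defs

section Comm

variable {A C Q : R}

theorem qA (hQA : Q * A = A * Q) (k : ℕ) : Q ^ k * A = A * Q ^ k := qpow hQA k

theorem qC (hQC : Q * C = C * Q) (k : ℕ) : Q ^ k * C = C * Q ^ k := qpow hQC k

theorem qAi (hQA : Q * A = A * Q) (k : ℕ) :
    Q ^ k * Ring.inverse A = Ring.inverse A * Q ^ k :=
  comm_inv (qA hQA k)

theorem qCi (hQC : Q * C = C * Q) (k : ℕ) :
    Q ^ k * Ring.inverse C = Ring.inverse C * Q ^ k :=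
  comm_inv (qC hQC k)

theorem qB (hQA : Q * A = A * Q) (hQC : Q * C = C * Q) (k : ℕ) :
    Q ^ k * Bv A C = Bv A C * Q ^ k := by
  unfold Bv
  rw [← mul_assoc, qAi hQA, mul_assoc, qC hQC, ← mul_assoc]

theorem qsubA (hQA : Q * A = A * Q) (p k : ℕ) :
    Q ^ k * (1 - A * Q ^ p) = (1 - A * Q ^ p) * Q ^ k := by
  rw [mul_sub, sub_mul, mul_one, one_mul, ← mul_assoc, qA hQA, mul_assoc,
    mul_assoc, ← pow_add, ← pow_add, Nat.add_comm]

theorem qsubC (hQC : Q * C = C * Q) (p k : ℕ) :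
    Q ^ k * (1 - C * Q ^ p) = (1 - C * Q ^ p) * Q ^ k := by
  rw [mul_sub, sub_mul, mul_one, one_mul, ← mul_assoc, qC hQC, mul_assoc,
    mul_assoc, ← pow_add, ← pow_add, Nat.add_comm]

theorem qu (hQA : Q * A = A * Q) (p k : ℕ) :
    Q ^ k * uv A Q p = uv A Q p * Q ^ k :=
  comm_inv (qsubA hQA p k)

theorem qw (hQC : Q * C = C * Q) (g k : ℕ) :
    Q ^ k * wv C Q g = wv C Q g * Q ^ k :=
  comm_inv (qsubC hQC g k)

theorem qD (hQA : Q * A = A * Q) (hQC : Q * C = C * Q) (e k : ℕ) :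
    Q ^ k * (A - C * Q ^ e) = (A - C * Q ^ e) * Q ^ k := by
  rw [mul_sub, sub_mul, qA hQA, ← mul_assoc, qC hQC, mul_assoc, mul_assoc,
    ← pow_add, ← pow_add, Nat.add_comm]

theorem Au (hQA : Q * A = A * Q) (p : ℕ) : A * uv A Q p = uv A Q p * A := by
  refine comm_inv ?_
  rw [mul_sub, sub_mul, mul_one, one_mul, mul_assoc A (Q ^ p) A, qA hQA p,
    ← mul_assoc]

theorem Cw (hQC : Q * C = C * Q) (g : ℕ) : C * wv C Q g = wv C Q g * C := by
  refine comm_inv ?_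
  rw [mul_sub, sub_mul, mul_one, one_mul, mul_assoc C (Q ^ g) C, qC hQC g,
    ← mul_assoc]

theorem Ciw (hQC : Q * C = C * Q) (hC : IsUnit C) (g : ℕ) :
    Ring.inverse C * wv C Q g = wv C Q g * Ring.inverse C := by
  refine comm_inv ?_
  have h1 : Ring.inverse C * (1 - C * Q ^ g) = Ring.inverse C - Q ^ g := by
    rw [mul_sub, mul_one, ← mul_assoc, Ring.inverse_mul_cancel C hC, one_mul]
  have h2 : (1 - C * Q ^ g) * Ring.inverse C = Ring.inverse C - Q ^ g := by
    rw [sub_mul, one_mul, mul_assoc, qCi hQC, ← mul_assoc,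
      Ring.mul_inverse_cancel C hC, one_mul]
  rw [h1, h2]

end Comm


section Core

variable {A C Q : R}

theorem sandwich {u v D : R} (huv : u * v = 1) (hvu : v * u = 1) :
    u * D - D * u = u * (D * v - v * D) * u := by
  have h : u * (D * v - v * D) * u = u * D * (v * u) - u * v * (D * u) := by
    noncomm_ring
  rw [h, hvu, huv, mul_one, one_mul]

/-- step2 : `D v - v D = (CA - AC) Q^(a+e)` where `D = A - CQ^e`, `v = 1 - AQ^a`. -/
theorem core_step2 (hQA : Q * A = A * Q) (hQC : Q * C = C * Q) (a e : ℕ) :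
    (A - C * Q ^ e) * (1 - A * Q ^ a) - (1 - A * Q ^ a) * (A - C * Q ^ e)
      = (C * A - A * C) * Q ^ (a + e) := by
  have t : (A - C * Q ^ e) * (1 - A * Q ^ a) - (1 - A * Q ^ a) * (A - C * Q ^ e)
      = C * (Q ^ e * A) * Q ^ a - A * (Q ^ a * C) * Q ^ e
        + (A * (Q ^ a * A) - A * (A * Q ^ a)) := by noncomm_ring
  rw [t, qA hQA e, qC hQC a, qA hQA a]
  have h1 : C * (A * Q ^ e) * Q ^ a = C * A * Q ^ (a + e) := by
    rw [← mul_assoc C A (Q ^ e), mul_assoc (C * A) (Q ^ e) (Q ^ a), ← pow_add,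
      Nat.add_comm e a]
  have h2 : A * (C * Q ^ a) * Q ^ e = A * C * Q ^ (a + e) := by
    rw [← mul_assoc A C (Q ^ a), mul_assoc (A * C) (Q ^ a) (Q ^ e), ← pow_add]
  rw [h1, h2]
  noncomm_ring

theorem core_i (hQA : Q * A = A * Q) (hQC : Q * C = C * Q) (a e : ℕ)
    (hu : IsUnit (1 - A * Q ^ a)) :
    uv A Q a * (A - C * Q ^ e) - (A - C * Q ^ e) * uv A Q a
      = uv A Q a * (C * A - A * C) * uv A Q a * Q ^ (a + e) := by
  have huv : uv A Q a * (1 - A * Q ^ a) = 1 := Ring.inverse_mul_cancel _ hu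
  have hvu : (1 - A * Q ^ a) * uv A Q a = 1 := Ring.mul_inverse_cancel _ hu
  rw [sandwich huv hvu, core_step2 hQA hQC a e]
  calc uv A Q a * ((C * A - A * C) * Q ^ (a + e)) * uv A Q a
      = uv A Q a * (C * A - A * C) * (Q ^ (a + e) * uv A Q a) := by noncomm_ring
    _ = uv A Q a * (C * A - A * C) * (uv A Q a * Q ^ (a + e)) := by
        rw [qu hQA a (a + e)]
    _ = uv A Q a * (C * A - A * C) * uv A Q a * Q ^ (a + e) := by noncomm_ring

/-- `C u = u C - u (AC-CA) Q^a u`. -/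
theorem core_Cu (hQA : Q * A = A * Q) (hQC : Q * C = C * Q) (a : ℕ)
    (hu : IsUnit (1 - A * Q ^ a)) :
    C * uv A Q a
      = uv A Q a * C - uv A Q a * ((A * C - C * A) * Q ^ a) * uv A Q a := by
  have huv : uv A Q a * (1 - A * Q ^ a) = 1 := Ring.inverse_mul_cancel _ hu
  have hvu : (1 - A * Q ^ a) * uv A Q a = 1 := Ring.mul_inverse_cancel _ hu
  have hCv : C * (1 - A * Q ^ a) - (1 - A * Q ^ a) * C = (A * C - C * A) * Q ^ a := by
    have t : C * (1 - A * Q ^ a) - (1 - A * Q ^ a) * C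
        = A * (Q ^ a * C) - C * A * Q ^ a := by noncomm_ring
    rw [t, qC hQC a]
    noncomm_ring
  have hs := sandwich huv hvu (D := C)
  rw [hCv] at hs
  have h0 : C * uv A Q a
      = uv A Q a * C - (uv A Q a * C - C * uv A Q a) := by abel
  rw [hs] at h0
  exact h0


/-- (ii) : `C u D - D u C = u (CA - AC) u` where `D = A - CQ^e`. -/
theorem core_ii (hQA : Q * A = A * Q) (hQC : Q * C = C * Q) (a e : ℕ)
    (hu : IsUnit (1 - A * Q ^ a)) :
    C * uv A Q a * (A - C * Q ^ e) - (A - C * Q ^ e) * uv A Q a * C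
      = uv A Q a * (C * A - A * C) * uv A Q a := by
  have hvu : (1 - A * Q ^ a) * uv A Q a = 1 := Ring.mul_inverse_cancel _ hu
  -- reduce to exponent-free part
  have t1 : C * uv A Q a * (A - C * Q ^ e) - (A - C * Q ^ e) * uv A Q a * C
      = C * uv A Q a * A - A * uv A Q a * C
        + (C * (Q ^ e * uv A Q a) * C - C * uv A Q a * (C * Q ^ e)) := by
    noncomm_ring
  have t2 : C * (Q ^ e * uv A Q a) * C = C * uv A Q a * (C * Q ^ e) := by
    rw [qu hQA a e]
    calc C * (uv A Q a * Q ^ e) * C = C * uv A Q a * (Q ^ e * C) := by noncomm_ring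
      _ = C * uv A Q a * (C * Q ^ e) := by rw [qC hQC e]
  rw [t1, t2, sub_self, add_zero]
  -- now : C u A - A u C = u K u
  rw [core_Cu hQA hQC a hu]
  have t3 : (uv A Q a * C - uv A Q a * ((A * C - C * A) * Q ^ a) * uv A Q a) * A
        - A * uv A Q a * C
      = uv A Q a * (C * A - A * C)
        - uv A Q a * ((A * C - C * A) * Q ^ a) * (uv A Q a * A)
        + (uv A Q a * (A * C) - A * uv A Q a * C) := by noncomm_ring
  rw [t3, ← Au hQA a]
  have t4 : uv A Q a * (A * C) - A * uv A Q a * C = 0 := by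
    rw [Au hQA a]; noncomm_ring
  rw [t4, add_zero]
  have t5 : uv A Q a * ((A * C - C * A) * Q ^ a) * (A * uv A Q a)
      = uv A Q a * ((A * C - C * A) * (Q ^ a * A)) * uv A Q a := by noncomm_ring
  rw [t5, qA hQA a]
  -- goal : u K - u ((AC-CA) (A Q^a)) u = u K u
  have t6 : uv A Q a * (C * A - A * C) * uv A Q a
      = uv A Q a * (C * A - A * C) * ((1 - A * Q ^ a) * uv A Q a)
        - uv A Q a * ((A * C - C * A) * (A * Q ^ a)) * uv A Q a := by noncomm_ring
  rw [t6, hvu, mul_one]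

/-- The core commutation identity:
`(1 - CQ^(a+e)) u (A - CQ^e) = (A - CQ^e) u (1 - CQ^(a+e))`, `u = (1-AQ^a)⁻¹`. -/
theorem core (hQA : Q * A = A * Q) (hQC : Q * C = C * Q) (a e : ℕ)
    (hu : IsUnit (1 - A * Q ^ a)) :
    (1 - C * Q ^ (a + e)) * uv A Q a * (A - C * Q ^ e)
      = (A - C * Q ^ e) * uv A Q a * (1 - C * Q ^ (a + e)) := by
  have key : uv A Q a * (A - C * Q ^ e) - (A - C * Q ^ e) * uv A Q a
      = (C * uv A Q a * (A - C * Q ^ e) - (A - C * Q ^ e) * uv A Q a * C)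
          * Q ^ (a + e) := by
    rw [core_ii hQA hQC a e hu]; exact core_i hQA hQC a e hu
  have exp : (1 - C * Q ^ (a + e)) * uv A Q a * (A - C * Q ^ e)
        - (A - C * Q ^ e) * uv A Q a * (1 - C * Q ^ (a + e))
      = (uv A Q a * (A - C * Q ^ e) - (A - C * Q ^ e) * uv A Q a)
        - (C * (Q ^ (a + e) * uv A Q a) * (A - C * Q ^ e)
            - (A - C * Q ^ e) * uv A Q a * C * Q ^ (a + e)) := by noncomm_ring
  have h2 : C * (Q ^ (a + e) * uv A Q a) * (A - C * Q ^ e)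
      = C * uv A Q a * (A - C * Q ^ e) * Q ^ (a + e) := by
    rw [qu hQA a (a + e)]
    calc C * (uv A Q a * Q ^ (a + e)) * (A - C * Q ^ e)
        = C * uv A Q a * (Q ^ (a + e) * (A - C * Q ^ e)) := by noncomm_ring
      _ = C * uv A Q a * ((A - C * Q ^ e) * Q ^ (a + e)) := by
          rw [qD hQA hQC e (a + e)]
      _ = C * uv A Q a * (A - C * Q ^ e) * Q ^ (a + e) := by noncomm_ring
  have hz : (1 - C * Q ^ (a + e)) * uv A Q a * (A - C * Q ^ e)
      - (A - C * Q ^ e) * uv A Q a * (1 - C * Q ^ (a + e)) = 0 := by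
    rw [exp, h2, key]; noncomm_ring
  exact sub_eq_zero.mp hz



theorem s1 (hQA : Q * A = A * Q) (hA : IsUnit A) (a e : ℕ) :
    Ring.inverse C * A * uv A Q a * (1 - Bv A C * Q ^ e)
      = Ring.inverse C * (uv A Q a * (A - C * Q ^ e)) := by
  have hAB : A * Bv A C = C := by
    unfold Bv; rw [← mul_assoc, Ring.mul_inverse_cancel A hA, one_mul]
  have hAact : A * (1 - Bv A C * Q ^ e) = A - C * Q ^ e := by
    rw [mul_sub, mul_one, ← mul_assoc, hAB]
  calc Ring.inverse C * A * uv A Q a * (1 - Bv A C * Q ^ e)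
      = Ring.inverse C * (A * uv A Q a * (1 - Bv A C * Q ^ e)) := by noncomm_ring
    _ = Ring.inverse C * (uv A Q a * A * (1 - Bv A C * Q ^ e)) := by rw [Au hQA a]
    _ = Ring.inverse C * (uv A Q a * (A * (1 - Bv A C * Q ^ e))) := by noncomm_ring
    _ = Ring.inverse C * (uv A Q a * (A - C * Q ^ e)) := by rw [hAact]

theorem s2 (hQA : Q * A = A * Q) (hQC : Q * C = C * Q) (hA : IsUnit A)
    (hC : IsUnit C) (e : ℕ) :
    (1 - Bv A C * Q ^ e) * (Ring.inverse C * A)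
      = Ring.inverse C * (A - C * Q ^ e) := by
  have hBQC : Bv A C * Q ^ e * (Ring.inverse C * A) = Q ^ e := by
    unfold Bv
    calc Ring.inverse A * C * Q ^ e * (Ring.inverse C * A)
        = Ring.inverse A * (C * (Q ^ e * Ring.inverse C)) * A := by noncomm_ring
      _ = Ring.inverse A * (C * (Ring.inverse C * Q ^ e)) * A := by rw [qCi hQC e]
      _ = Ring.inverse A * (C * Ring.inverse C) * Q ^ e * A := by noncomm_ring
      _ = Ring.inverse A * (Q ^ e * A) := by
          rw [Ring.mul_inverse_cancel C hC, mul_one, mul_assoc]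
      _ = Ring.inverse A * (A * Q ^ e) := by rw [qA hQA e]
      _ = Q ^ e := by rw [← mul_assoc, Ring.inverse_mul_cancel A hA, one_mul]
  calc (1 - Bv A C * Q ^ e) * (Ring.inverse C * A)
      = Ring.inverse C * A - Bv A C * Q ^ e * (Ring.inverse C * A) := by noncomm_ring
    _ = Ring.inverse C * A - Ring.inverse C * (C * Q ^ e) := by
        rw [hBQC, ← mul_assoc, Ring.inverse_mul_cancel C hC, one_mul]
    _ = Ring.inverse C * (A - C * Q ^ e) := by noncomm_ring

theorem s3 (hQA : Q * A = A * Q) (hQC : Q * C = C * Q) (a e : ℕ)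
    (hu : IsUnit (1 - A * Q ^ a)) (hwu : IsUnit (1 - C * Q ^ (a + e))) :
    uv A Q a * (A - C * Q ^ e) * wv C Q (a + e)
      = wv C Q (a + e) * ((A - C * Q ^ e) * uv A Q a) := by
  have hw1 : wv C Q (a + e) * (1 - C * Q ^ (a + e)) = 1 :=
    Ring.inverse_mul_cancel _ hwu
  have hw2 : (1 - C * Q ^ (a + e)) * wv C Q (a + e) = 1 :=
    Ring.mul_inverse_cancel _ hwu
  have c := core hQA hQC a e hu
  calc uv A Q a * (A - C * Q ^ e) * wv C Q (a + e)
      = (wv C Q (a + e) * (1 - C * Q ^ (a + e)))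
          * (uv A Q a * (A - C * Q ^ e) * wv C Q (a + e)) := by rw [hw1, one_mul]
    _ = wv C Q (a + e) * ((1 - C * Q ^ (a + e)) * uv A Q a * (A - C * Q ^ e))
          * wv C Q (a + e) := by noncomm_ring
    _ = wv C Q (a + e) * ((A - C * Q ^ e) * uv A Q a * (1 - C * Q ^ (a + e)))
          * wv C Q (a + e) := by rw [c]
    _ = wv C Q (a + e) * ((A - C * Q ^ e) * uv A Q a)
          * ((1 - C * Q ^ (a + e)) * wv C Q (a + e)) := by noncomm_ring
    _ = wv C Q (a + e) * ((A - C * Q ^ e) * uv A Q a) := by rw [hw2, mul_one]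

theorem key1 (hQA : Q * A = A * Q) (hQC : Q * C = C * Q) (hA : IsUnit A)
    (hC : IsUnit C) (a e : ℕ) (hu : IsUnit (1 - A * Q ^ a))
    (hwu : IsUnit (1 - C * Q ^ (a + e))) :
    Ring.inverse C * A * uv A Q a * (1 - Bv A C * Q ^ e) * wv C Q (a + e)
      = wv C Q (a + e) * (1 - Bv A C * Q ^ e)
          * (Ring.inverse C * A * uv A Q a) := by
  calc Ring.inverse C * A * uv A Q a * (1 - Bv A C * Q ^ e) * wv C Q (a + e)
      = Ring.inverse C * (uv A Q a * (A - C * Q ^ e)) * wv C Q (a + e) := by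
        rw [s1 hQA hA a e]
    _ = Ring.inverse C * (uv A Q a * (A - C * Q ^ e) * wv C Q (a + e)) := by
        noncomm_ring
    _ = Ring.inverse C * (wv C Q (a + e) * ((A - C * Q ^ e) * uv A Q a)) := by
        rw [s3 hQA hQC a e hu hwu]
    _ = Ring.inverse C * wv C Q (a + e) * ((A - C * Q ^ e) * uv A Q a) := by
        noncomm_ring
    _ = wv C Q (a + e) * Ring.inverse C * ((A - C * Q ^ e) * uv A Q a) := by
        rw [Ciw hQC hC (a + e)]
    _ = wv C Q (a + e) * (Ring.inverse C * (A - C * Q ^ e)) * uv A Q a := by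
        noncomm_ring
    _ = wv C Q (a + e) * ((1 - Bv A C * Q ^ e) * (Ring.inverse C * A))
          * uv A Q a := by rw [s2 hQA hQC hA hC e]
    _ = wv C Q (a + e) * (1 - Bv A C * Q ^ e)
          * (Ring.inverse C * A * uv A Q a) := by noncomm_ring

theorem key2 (hQA : Q * A = A * Q) (hQC : Q * C = C * Q) (hA : IsUnit A)
    (hC : IsUnit C) (a b : ℕ) (hu : IsUnit (1 - A * Q ^ a))
    (hwu : IsUnit (1 - C * Q ^ (a + b))) :
    Ring.inverse C * A * uv A Q a * (1 - Bv A C * Q ^ b) * wv C Q (a + b)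
        * ((1 - A * Q ^ a) * Bv A C)
      = wv C Q (a + b) * (1 - Bv A C * Q ^ b) := by
  have huv : uv A Q a * (1 - A * Q ^ a) = 1 := Ring.inverse_mul_cancel _ hu
  have hCAB : Ring.inverse C * A * Bv A C = 1 := by
    unfold Bv
    calc Ring.inverse C * A * (Ring.inverse A * C)
        = Ring.inverse C * (A * Ring.inverse A) * C := by noncomm_ring
      _ = Ring.inverse C * C := by rw [Ring.mul_inverse_cancel A hA, mul_one]
      _ = 1 := Ring.inverse_mul_cancel C hC
  calc Ring.inverse C * A * uv A Q a * (1 - Bv A C * Q ^ b) * wv C Q (a + b)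
        * ((1 - A * Q ^ a) * Bv A C)
      = wv C Q (a + b) * (1 - Bv A C * Q ^ b) * (Ring.inverse C * A * uv A Q a)
          * ((1 - A * Q ^ a) * Bv A C) := by rw [key1 hQA hQC hA hC a b hu hwu]
    _ = wv C Q (a + b) * (1 - Bv A C * Q ^ b)
          * (Ring.inverse C * A * (uv A Q a * (1 - A * Q ^ a)) * Bv A C) := by
        noncomm_ring
    _ = wv C Q (a + b) * (1 - Bv A C * Q ^ b)
          * (Ring.inverse C * A * Bv A C) := by rw [huv, mul_one]
    _ = wv C Q (a + b) * (1 - Bv A C * Q ^ b) := by rw [hCAB, mul_one]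



end Core

/-- The `E`-block: `C⁻¹ A u_p (1 - B Q^b) w_g ((1 - A Q^p) B)`. -/
noncomputable def Ev (A C Q : R) (p b g : ℕ) : R :=
  Ring.inverse C * A * uv A Q p * (1 - Bv A C * Q ^ b) * wv C Q g
    * ((1 - A * Q ^ p) * Bv A C)

theorem Xv_eq (A C Q : R) (p q : ℕ) :
    Xv A C Q p q
      = Ring.inverse C * A * uv A Q p * (1 - Bv A C * Q ^ q) := rfl

section Star

variable {A C Q : R}

theorem star (hQA : Q * A = A * Q) (hQC : Q * C = C * Q) (hA : IsUnit A)
    (hC : IsUnit C) (b : ℕ) :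
    ∀ n, ∀ a, (∀ j, j ≤ n → IsUnit (1 - A * Q ^ (j + a))) →
      IsUnit (1 - C * Q ^ (n + a + b)) →
      opr n (fun j => Xv A C Q (j + a) (n - j + b))
          * Ev A C Q (n + a) b (n + a + b)
        = wv C Q (n + a + b) * (1 - Bv A C * Q ^ (n + b))
            * opr n (fun j => Xv A C Q (j + a) (n - 1 - j + b)) := by
  intro n
  induction n with
  | zero =>
    intro a hu hw
    have hu0 : IsUnit (1 - A * Q ^ a) := by
      have := hu 0 (by omega); rwa [Nat.zero_add] at this
    rw [show (0 : ℕ) + a = a from Nat.zero_add a] at hw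
    simp only [opr_zero, one_mul, mul_one, Nat.zero_add]
    exact key2 hQA hQC hA hC a b hu0 hw
  | succ n ih =>
    intro a hu hw
    have hu0 : IsUnit (1 - A * Q ^ a) := by
      have := hu 0 (by omega); rwa [Nat.zero_add] at this
    have hu' : ∀ j, j ≤ n → IsUnit (1 - A * Q ^ (j + (a + 1))) := by
      intro j hj
      have := hu (j + 1) (by omega)
      rwa [show j + 1 + a = j + (a + 1) from by omega] at this
    have hw' : IsUnit (1 - C * Q ^ (n + (a + 1) + b)) := by
      rwa [show n + 1 + a + b = n + (a + 1) + b from by omega] at hw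
    have hw1 : IsUnit (1 - C * Q ^ (a + (n + 1 + b))) := by
      rwa [show n + 1 + a + b = a + (n + 1 + b) from by omega] at hw
    have hL : opr (n + 1) (fun j => Xv A C Q (j + a) (n + 1 - j + b))
        = Xv A C Q a (n + 1 + b)
            * opr n (fun j => Xv A C Q (j + (a + 1)) (n - j + b)) := by
      rw [opr_succ_left]
      congr 1
      · show Xv A C Q (0 + a) (n + 1 - 0 + b) = Xv A C Q a (n + 1 + b)
        rw [Nat.zero_add, Nat.sub_zero]
      · refine opr_congr fun j hj => ?_
        show Xv A C Q (j + 1 + a) (n + 1 - (j + 1) + b)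
          = Xv A C Q (j + (a + 1)) (n - j + b)
        rw [show j + 1 + a = j + (a + 1) from by omega,
          show n + 1 - (j + 1) = n - j from by omega]
    have hR : opr (n + 1) (fun j => Xv A C Q (j + a) (n + 1 - 1 - j + b))
        = Xv A C Q a (n + b)
            * opr n (fun j => Xv A C Q (j + (a + 1)) (n - 1 - j + b)) := by
      rw [opr_succ_left]
      congr 1
      · show Xv A C Q (0 + a) (n + 1 - 1 - 0 + b) = Xv A C Q a (n + b)
        rw [Nat.zero_add, show n + 1 - 1 - 0 = n from by omega]
      · refine opr_congr fun j hj => ?_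
        show Xv A C Q (j + 1 + a) (n + 1 - 1 - (j + 1) + b)
          = Xv A C Q (j + (a + 1)) (n - 1 - j + b)
        rw [show j + 1 + a = j + (a + 1) from by omega,
          show n + 1 - 1 - (j + 1) = n - 1 - j from by omega]
    have hX : Xv A C Q a (n + 1 + b) * wv C Q (a + (n + 1 + b))
        = wv C Q (a + (n + 1 + b)) * (1 - Bv A C * Q ^ (n + 1 + b))
            * (Ring.inverse C * A * uv A Q a) := by
      rw [Xv_eq]
      exact key1 hQA hQC hA hC a (n + 1 + b) hu0 hw1
    calc opr (n + 1) (fun j => Xv A C Q (j + a) (n + 1 - j + b))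
          * Ev A C Q (n + 1 + a) b (n + 1 + a + b)
        = Xv A C Q a (n + 1 + b)
            * (opr n (fun j => Xv A C Q (j + (a + 1)) (n - j + b))
              * Ev A C Q (n + (a + 1)) b (n + (a + 1) + b)) := by
          rw [hL, show n + 1 + a = n + (a + 1) from by omega, mul_assoc]
      _ = Xv A C Q a (n + 1 + b)
            * (wv C Q (n + (a + 1) + b) * (1 - Bv A C * Q ^ (n + b))
              * opr n (fun j => Xv A C Q (j + (a + 1)) (n - 1 - j + b))) := by
          rw [ih (a + 1) hu' hw']
      _ = Xv A C Q a (n + 1 + b) * wv C Q (a + (n + 1 + b))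
            * ((1 - Bv A C * Q ^ (n + b))
              * opr n (fun j => Xv A C Q (j + (a + 1)) (n - 1 - j + b))) := by
          rw [show n + (a + 1) + b = a + (n + 1 + b) from by omega]
          noncomm_ring
      _ = wv C Q (a + (n + 1 + b)) * (1 - Bv A C * Q ^ (n + 1 + b))
            * ((Ring.inverse C * A * uv A Q a * (1 - Bv A C * Q ^ (n + b)))
              * opr n (fun j => Xv A C Q (j + (a + 1)) (n - 1 - j + b))) := by
          rw [hX]
          noncomm_ring
      _ = wv C Q (n + 1 + a + b) * (1 - Bv A C * Q ^ (n + 1 + b))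
            * (Xv A C Q a (n + b)
              * opr n (fun j => Xv A C Q (j + (a + 1)) (n - 1 - j + b))) := by
          rw [← Xv_eq, show a + (n + 1 + b) = n + 1 + a + b from by omega]
      _ = wv C Q (n + 1 + a + b) * (1 - Bv A C * Q ^ (n + 1 + b))
            * opr (n + 1) (fun j => Xv A C Q (j + a) (n + 1 - 1 - j + b)) := by
          rw [hR]

end Star
end RCV

open RCV

/-- Product identity for the reversed Chu–Vandermonde summation
(Lemma 4 of the paper):
`(∏_{j=1}^n C⁻¹A(I−AQ^{j−1})⁻¹(I−A⁻¹CQ^{n−j})) ⌈A; C; Q, A⁻¹C⌋_n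
  = ⌈A⁻¹C; C; Q, I⌋_n`. -/
theorem reversedCVProduct {R : Type*} [Ring R] (A C Q : R) (n : ℕ)
    (hQA : Q * A = A * Q) (hQC : Q * C = C * Q)
    (hA : IsUnit A) (hC : IsUnit C)
    (hAm : ∀ m : ℕ, m < n → IsUnit (1 - A * Q ^ m))
    (hCm : ∀ m : ℕ, m < n → IsUnit (1 - C * Q ^ m)) :
    opr n (fun j =>
        Ring.inverse C * A * Ring.inverse (1 - A * Q ^ j) *
          (1 - Ring.inverse A * C * Q ^ (n - 1 - j))) *
      opr n (fun j =>
        Ring.inverse (1 - C * Q ^ (n - 1 - j)) * (1 - A * Q ^ (n - 1 - j)) *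
          (Ring.inverse A * C)) =
    opr n (fun j =>
      Ring.inverse (1 - C * Q ^ (n - 1 - j)) *
        (1 - Ring.inverse A * C * Q ^ (n - 1 - j))) := by
  induction n with
  | zero =>
    show (1 : R) * 1 = 1
    rw [one_mul]
  | succ n ih =>
    show opr (n + 1) (fun j => Xv A C Q j (n - j))
        * opr (n + 1) (fun j => wv C Q (n - j) * (1 - A * Q ^ (n - j)) * Bv A C)
      = opr (n + 1) (fun j => wv C Q (n - j) * (1 - Bv A C * Q ^ (n - j)))
    have ih' : opr n (fun j => Xv A C Q j (n - 1 - j))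
        * opr n (fun j =>
            wv C Q (n - 1 - j) * (1 - A * Q ^ (n - 1 - j)) * Bv A C)
        = opr n (fun j =>
            wv C Q (n - 1 - j) * (1 - Bv A C * Q ^ (n - 1 - j))) :=
      ih (fun m hm => hAm m (by omega)) (fun m hm => hCm m (by omega))
    have hstar : opr n (fun j => Xv A C Q j (n - j)) * Ev A C Q n 0 n
        = wv C Q n * (1 - Bv A C * Q ^ n)
            * opr n (fun j => Xv A C Q j (n - 1 - j)) :=
      star hQA hQC hA hC 0 n 0 (fun j hj => hAm j (by omega)) (hCm n (by omega))
    have hsplitL : opr (n + 1) (fun j => Xv A C Q j (n - j))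
        = opr n (fun j => Xv A C Q j (n - j)) * Xv A C Q n (n - n) :=
      opr_succ_right n _
    have hsplitM : opr (n + 1)
          (fun j => wv C Q (n - j) * (1 - A * Q ^ (n - j)) * Bv A C)
        = wv C Q n * (1 - A * Q ^ n) * Bv A C
            * opr n (fun j =>
                wv C Q (n - 1 - j) * (1 - A * Q ^ (n - 1 - j)) * Bv A C) := by
      rw [opr_succ_left]
      congr 1
      refine opr_congr fun j hj => ?_
      show wv C Q (n - (j + 1)) * (1 - A * Q ^ (n - (j + 1))) * Bv A C
        = wv C Q (n - 1 - j) * (1 - A * Q ^ (n - 1 - j)) * Bv A C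
      rw [show n - (j + 1) = n - 1 - j from by omega]
    have hsplitR : opr (n + 1)
          (fun j => wv C Q (n - j) * (1 - Bv A C * Q ^ (n - j)))
        = wv C Q n * (1 - Bv A C * Q ^ n)
            * opr n (fun j =>
                wv C Q (n - 1 - j) * (1 - Bv A C * Q ^ (n - 1 - j))) := by
      rw [opr_succ_left]
      congr 1
      refine opr_congr fun j hj => ?_
      show wv C Q (n - (j + 1)) * (1 - Bv A C * Q ^ (n - (j + 1)))
        = wv C Q (n - 1 - j) * (1 - Bv A C * Q ^ (n - 1 - j))
      rw [show n - (j + 1) = n - 1 - j from by omega]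
    have hXE : Xv A C Q n (n - n) * (wv C Q n * (1 - A * Q ^ n) * Bv A C)
        = Ev A C Q n 0 n := by
      rw [show n - n = 0 from by omega, Xv_eq]
      simp only [Ev]
      noncomm_ring
    calc opr (n + 1) (fun j => Xv A C Q j (n - j))
          * opr (n + 1)
            (fun j => wv C Q (n - j) * (1 - A * Q ^ (n - j)) * Bv A C)
        = opr n (fun j => Xv A C Q j (n - j))
            * (Xv A C Q n (n - n) * (wv C Q n * (1 - A * Q ^ n) * Bv A C))
            * opr n (fun j =>
                wv C Q (n - 1 - j) * (1 - A * Q ^ (n - 1 - j)) * Bv A C) := by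
          rw [hsplitL, hsplitM]; noncomm_ring
      _ = opr n (fun j => Xv A C Q j (n - j)) * Ev A C Q n 0 n
            * opr n (fun j =>
                wv C Q (n - 1 - j) * (1 - A * Q ^ (n - 1 - j)) * Bv A C) := by
          rw [hXE]
      _ = wv C Q n * (1 - Bv A C * Q ^ n)
            * (opr n (fun j => Xv A C Q j (n - 1 - j))
              * opr n (fun j =>
                  wv C Q (n - 1 - j) * (1 - A * Q ^ (n - 1 - j)) * Bv A C)) := by
          rw [hstar]; noncomm_ring
      _ = wv C Q n * (1 - Bv A C * Q ^ n)
            * opr n (fun j =>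
                wv C Q (n - 1 - j) * (1 - Bv A C * Q ^ (n - 1 - j))) := by
          rw [ih']
      _ = opr (n + 1) (fun j => wv C Q (n - j) * (1 - Bv A C * Q ^ (n - j))) := by
          rw [hsplitR]
end
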